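/- arXiv:2009.10162 — 2 statements merged into one kernel-verified Lean document; each statement's English description precedes it below -/
import Mathlib

section
/- Let (W_n)_{n≥0} be an odometer based construction sequence with limit K such that for every n, every word w ∈ W_n occurs at least twice as a contiguous subword of every word w' ∈ W_{n+1}. Then the shift on K is topologically minimal: for every x ∈ K, the orbit { shⁿ x : n ∈ ℤ } is dense in K. -/
open MeasureTheory

namespace OdoPaper

/-- The shift map `sh` on bi-infinite sequences: `(sh x)(n) = x(n+1)`. -/
def shift {σ : Type*} (x : ℤ → σ) : ℤ → σ := fun m => x (m + 1)

/-- The `n`-th iterate (`n : ℤ`) of the shift map: `(shiftZ n x)(m) = x(m+n)`. -/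
def shiftZ {σ : Type*} (n : ℤ) (x : ℤ → σ) : ℤ → σ := fun m => x (m + n)

/-- `Kseq k n = K_n`, where `K_0 = 1` and `K_{n+1} = K_n * k_n`. -/
def Kseq (k : ℕ → ℕ) : ℕ → ℕ
  | 0 => 1
  | n + 1 => Kseq k n * k n

/-- `w` occurs as a contiguous subword of `l` starting at position `p`. -/
def occursAt {σ : Type*} (w l : List σ) (p : ℕ) : Prop :=
  p + w.length ≤ l.length ∧ (l.drop p).take w.length = w

/-- The finite contiguous subword `x↾[a, a+m)` of `x : ℤ → σ`. -/
def subwordAt {σ : Type*} (x : ℤ → σ) (a : ℤ) (m : ℕ) : List σ :=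
  List.ofFn (fun i : Fin m => x (a + i))

/-- The limit `K` of a construction sequence: all bi-infinite sequences each of whose finite
contiguous subwords occurs as a contiguous subword of some word in some `W n`. -/
def CSLimit {σ : Type*} (W : ℕ → Set (List σ)) : Set (ℤ → σ) :=
  { x | ∀ (a : ℤ) (m : ℕ), ∃ n, ∃ w ∈ W n, ∃ p, occursAt (subwordAt x a m) w p }

/-- `(W_n)` is an odometer based construction sequence over the finite alphabet `σ` with
coefficient sequence `k`:  `W 0` consists of the one-letter words; every word of `W n` has
length `K_n`; every word of `W (n+1)` is a concatenation of `k n` words from `W n`; each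
`W n` is uniquely readable; and every `n`-word occurs in every `(n+1)`-word. -/
structure OdometerBasedCS (σ : Type*) [Fintype σ] (k : ℕ → ℕ) (W : ℕ → Set (List σ)) :
    Prop where
  two_le : ∀ n, 2 ≤ k n
  w_zero : W 0 = { l : List σ | ∃ a : σ, l = [a] }
  nonempty : ∀ n, (W n).Nonempty
  finite : ∀ n, (W n).Finite
  length_eq : ∀ n, ∀ w ∈ W n, w.length = Kseq k n
  concat : ∀ n, ∀ w' ∈ W (n + 1),
    ∃ g : Fin (k n) → List σ, (∀ i, g i ∈ W n) ∧ w' = (List.ofFn g).flatten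
  unique_readable : ∀ n, ∀ u ∈ W n, ∀ v ∈ W n, ∀ w ∈ W n, ∀ p,
    occursAt w (u ++ v) p → p = 0 ∨ p = Kseq k n
  subword : ∀ n, ∀ w ∈ W n, ∀ w' ∈ W (n + 1), ∃ p, occursAt w w' p

/-!
Every finite subword of `y ∈ K` lies in some `n`-word `w`. A window of `x` of length
`2 K_{n+1}` lies in some `N`-word, which is a concatenation of `(n + 1)`-words; so the window
contains a whole `(n + 1)`-word and therefore `w`. Hence shifts of `x` agree with `y` on
arbitrarily long centred windows.
-/

section Words

variable {σ : Type*}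

lemma occursAt_iff_getElem {u l : List σ} {p : ℕ} :
    occursAt u l p ↔ ∃ _ : p + u.length ≤ l.length,
      ∀ (i : ℕ) (hi : i < u.length), l[p + i] = u[i] := by
  refine ⟨fun ⟨hlen, htake⟩ => ⟨hlen, fun i hi => ?_⟩, fun ⟨hlen, hget⟩ => ⟨hlen, ?_⟩⟩
  · calc l[p + i] = ((l.drop p).take u.length)[i]'(by rw [htake]; exact hi) := by
          rw [List.getElem_take, List.getElem_drop]
      _ = u[i] := by simp only [htake]
  · exact List.ext_getElem (by simp; omega) fun i _ hi => by simp [hget i hi]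

lemma occursAt.trans {u v l : List σ} {p q : ℕ} (huv : occursAt u v p) (hvl : occursAt v l q) :
    occursAt u l (q + p) := by
  obtain ⟨huv, huv'⟩ := occursAt_iff_getElem.1 huv
  obtain ⟨hvl, hvl'⟩ := occursAt_iff_getElem.1 hvl
  refine occursAt_iff_getElem.2 ⟨by omega, fun i hi => ?_⟩
  rw [← huv' i hi, ← hvl' (p + i) (by omega)]
  simp only [Nat.add_assoc]

lemma occursAt.of_le {u v l : List σ} {p q : ℕ} (hu : occursAt u l q) (hv : occursAt v l p)
    (hpq : p ≤ q) (hqu : q + u.length ≤ p + v.length) :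
    occursAt u v (q - p) := by
  obtain ⟨_, hu⟩ := occursAt_iff_getElem.1 hu
  obtain ⟨hv, hv'⟩ := occursAt_iff_getElem.1 hv
  refine occursAt_iff_getElem.2 ⟨by omega, fun i hi => ?_⟩
  rw [← hu i hi, ← hv' (q - p + i) (by omega)]
  congr 1
  omega

lemma occursAt.append_left {u l : List σ} {p : ℕ} (h : occursAt u l p) (v : List σ) :
    occursAt u (v ++ l) (v.length + p) := by
  obtain ⟨hlen, h⟩ := occursAt_iff_getElem.1 h
  refine occursAt_iff_getElem.2 ⟨by simp; omega, fun i hi => ?_⟩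
  rw [← h i hi, List.getElem_append_right (by omega)]
  simp only [Nat.add_assoc, Nat.add_sub_cancel_left]

lemma eq_subwordAt_of_occursAt {u : List σ} {x : ℤ → σ} {a : ℤ} {m s : ℕ}
    (h : occursAt u (subwordAt x a m) s) : u = subwordAt x (a + s) u.length := by
  obtain ⟨_, h⟩ := occursAt_iff_getElem.1 h
  refine List.ext_getElem (by simp [subwordAt]) fun i hi _ => ?_
  rw [← h i hi]
  simp only [subwordAt, List.getElem_ofFn]
  push_cast
  ring_nf

lemma occursAt_getElem_flatten {L : List (List σ)} {L0 : ℕ} (hL : ∀ v ∈ L, v.length = L0)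
    {j : ℕ} (hj : j < L.length) : occursAt L[j] L.flatten (j * L0) := by
  induction L generalizing j with
  | nil => simp at hj
  | cons v L ih =>
    have hv : v.length = L0 := hL v (by simp)
    cases j with
    | zero => exact ⟨by simp, by simp [hv]⟩
    | succ j =>
      have hshift : (j + 1) * L0 = v.length + j * L0 := by rw [hv]; ring
      rw [hshift]
      exact (ih (fun u hu => hL u (by simp [hu])) (Nat.lt_of_succ_lt_succ hj)).append_left v

lemma length_flatten_of_forall_length_eq {L : List (List σ)} {L0 : ℕ}
    (hL : ∀ v ∈ L, v.length = L0) : L.flatten.length = L.length * L0 := by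
  rw [List.length_flatten, List.map_congr_left hL, List.map_const', List.sum_replicate,
    smul_eq_mul]

lemma exists_mem_occursAt_of_occursAt_flatten {L : List (List σ)} {L0 : ℕ} (hL0 : 0 < L0)
    (hL : ∀ v ∈ L, v.length = L0) {u : List σ} {p : ℕ} (hu : occursAt u L.flatten p)
    (hlen : 2 * L0 ≤ u.length) : ∃ v ∈ L, ∃ s, occursAt v u s := by
  set j := p / L0 + 1
  have hj : j * L0 = L0 * (p / L0) + L0 := by simp only [j]; ring
  have hp := Nat.div_add_mod p L0
  have hp' := Nat.mod_lt p hL0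
  have hjlt : j < L.length := by
    refine Nat.lt_of_mul_lt_mul_right (a := L0) ?_
    have := hu.1
    rw [length_flatten_of_forall_length_eq hL] at this
    omega
  have hv := occursAt_getElem_flatten hL hjlt
  refine ⟨L[j], List.getElem_mem hjlt, _, hv.of_le hu (by omega) ?_⟩
  rw [hL _ (List.getElem_mem hjlt)]
  omega

lemma eq_of_subwordAt_eq {x y : ℤ → σ} {a b : ℤ} {m : ℕ}
    (h : subwordAt y a m = subwordAt x b m) {i : ℕ} (hi : i < m) : y (a + i) = x (b + i) :=
  congrFun (List.ofFn_inj.1 h) ⟨i, hi⟩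

lemma mem_closure_range_shiftZ [TopologicalSpace σ] {x y : ℤ → σ}
    (h : ∀ a m, ∃ b, subwordAt y a m = subwordAt x b m) :
    y ∈ closure (Set.range fun n : ℤ => shiftZ n x) := by
  choose b hb using fun m : ℕ => h (-m) (2 * m + 1)
  refine mem_closure_of_tendsto (f := fun m : ℕ => shiftZ (b m + m) x) (b := Filter.atTop) ?_
    (Filter.Eventually.of_forall fun m => ⟨_, rfl⟩)
  refine tendsto_pi_nhds.2 fun i => tendsto_const_nhds.congr' ?_
  filter_upwards [Filter.eventually_ge_atTop i.natAbs] with m hm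
  have hagree := eq_of_subwordAt_eq (hb m) (i := (i + m).toNat) (by omega)
  rw [Int.toNat_of_nonneg (by omega), show -(m : ℤ) + (i + m) = i by ring, show b m + (i + m) = i + (b m + m) by ring] at hagree
  exact hagree

end Words

section Odometer

lemma Kseq_pos {k : ℕ → ℕ} (hk : ∀ n, 0 < k n) (n : ℕ) : 0 < Kseq k n := by
  induction n with
  | zero => simp [Kseq]
  | succ n ih => exact Nat.mul_pos ih (hk n)

lemma Kseq_mono {k : ℕ → ℕ} (hk : ∀ n, 0 < k n) : Monotone (Kseq k) :=
  monotone_nat_of_le_succ fun n => Nat.le_mul_of_pos_right _ (hk n)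

variable {α : Type} [Fintype α] {k : ℕ → ℕ} {W : ℕ → Set (List α)}

namespace OdometerBasedCS

lemma k_pos (hW : OdometerBasedCS α k W) (n : ℕ) : 0 < k n :=
  Nat.lt_of_lt_of_le two_pos (hW.two_le n)

lemma exists_flatten_of_mem (hW : OdometerBasedCS α k W) {n : ℕ} :
    ∀ {j : ℕ} {w : List α}, w ∈ W (n + j) →
      ∃ L : List (List α), (∀ v ∈ L, v ∈ W n) ∧ w = L.flatten
  | 0, w, hw => ⟨[w], by simpa using hw, by simp⟩
  | j + 1, w, hw => by
    obtain ⟨g, hg, rfl⟩ := hW.concat (n + j) w hw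
    choose Ls hLs hg_eq using fun i => hW.exists_flatten_of_mem (hg i)
    refine ⟨(List.ofFn Ls).flatten, fun v hv => ?_, ?_⟩
    · obtain ⟨_, hl, hvl⟩ := List.mem_flatten.1 hv
      obtain ⟨i, rfl⟩ := List.mem_ofFn.1 hl
      exact hLs i v hvl
    · rw [List.flatten_flatten, List.map_ofFn]
      exact congrArg _ (congrArg _ (funext hg_eq))

lemma exists_occursAt_of_window (hW : OdometerBasedCS α k W) {n N p : ℕ} {w w' u : List α}
    (hw : w ∈ W n) (hw' : w' ∈ W N) (hu : occursAt u w' p)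
    (hlen : 2 * Kseq k (n + 1) ≤ u.length) : ∃ s, occursAt w u s := by
  have hpos := Kseq_pos hW.k_pos (n + 1)
  have hN : n + 1 ≤ N := by
    refine ((Kseq_mono hW.k_pos).reflect_lt ?_).le
    have := hu.1
    rw [hW.length_eq N w' hw'] at this
    omega
  obtain ⟨j, rfl⟩ := Nat.exists_eq_add_of_le hN
  obtain ⟨L, hL, rfl⟩ := hW.exists_flatten_of_mem hw'
  obtain ⟨v, hv, s, hs⟩ := exists_mem_occursAt_of_occursAt_flatten hpos
    (fun v hv => hW.length_eq _ v (hL v hv)) hu hlen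
  obtain ⟨r, hr⟩ := hW.subword n w hw v (hL v hv)
  exact ⟨_, hr.trans hs⟩

lemma exists_subwordAt_eq (hW : OdometerBasedCS α k W) {x y : ℤ → α}
    (hx : x ∈ CSLimit W) (hy : y ∈ CSLimit W) (a : ℤ) (m : ℕ) :
    ∃ b, subwordAt y a m = subwordAt x b m := by
  obtain ⟨n, w, hw, p, hp⟩ := hy a m
  obtain ⟨N, w', hw', p', hp'⟩ := hx 0 (2 * Kseq k (n + 1))
  obtain ⟨s, hs⟩ := hW.exists_occursAt_of_window hw hw' hp' (by simp [subwordAt])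
  have h := eq_subwordAt_of_occursAt (hp.trans hs)
  rw [show (subwordAt y a m).length = m from List.length_ofFn] at h
  exact ⟨_, h⟩

end OdometerBasedCS

end Odometer

theorem minimal_of_every_word_occurs_twice_general
    {α : Type} [Fintype α] [TopologicalSpace α]
    (k : ℕ → ℕ) (W : ℕ → Set (List α)) (hW : OdometerBasedCS α k W) :
    ∀ x ∈ CSLimit W, ∀ y ∈ CSLimit W,
      y ∈ closure (Set.range fun n : ℤ => shiftZ n x) :=
  fun _ hx _ hy => mem_closure_range_shiftZ (hW.exists_subwordAt_eq hx hy)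

/-- if every `n`-word occurs at least twice in every `(n+1)`-word, then the
shift on the limit `K` is topologically minimal: every shift-orbit is dense in `K`. -/
theorem minimal_of_every_word_occurs_twice
    {α : Type} [Fintype α] [TopologicalSpace α] [DiscreteTopology α]
    (k : ℕ → ℕ) (W : ℕ → Set (List α)) (hW : OdometerBasedCS α k W)
    (htwice : ∀ n, ∀ w ∈ W n, ∀ w' ∈ W (n + 1),
      ∃ p q, p ≠ q ∧ occursAt w w' p ∧ occursAt w w' q) :
    ∀ x ∈ CSLimit W, ∀ y ∈ CSLimit W,
      y ∈ closure (Set.range fun n : ℤ => shiftZ n x) :=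
  minimal_of_every_word_occurs_twice_general k W hW

end OdoPaper
end

section
/- Let (W_n)_{n≥0} be an odometer based construction sequence with limit K and let ρ be a shift-invariant Borel probability measure on K. Then for every n and every word w ∈ W_n, the cylinder ⟨w⟩ satisfies 1/K_{n+1} ≤ ρ(⟨w⟩) ≤ f_n / K_n, where f_n is the maximal frequency of n-words in (n+1)-words. -/
open MeasureTheory

namespace OdoPaper

/-- The number of occurrences of `w` as a contiguous subword of `l`. -/
noncomputable def occCount {σ : Type*} (w l : List σ) : ℕ :=
  Nat.card { p : ℕ // occursAt w l p }

/-- `Freq k n m w w'` : the number of occurrences of the `n`-word `w` in the `m`-word `w'`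
divided by `K_m / K_n`. -/
noncomputable def Freq {σ : Type*} (k : ℕ → ℕ) (n m : ℕ) (w w' : List σ) : ℝ :=
  (occCount w w' : ℝ) / ((Kseq k m : ℝ) / (Kseq k n : ℝ))

/-- `f_n` : the maximal frequency of `n`-words in `(n+1)`-words. -/
noncomputable def maxFreq {σ : Type*} (k : ℕ → ℕ) (W : ℕ → Set (List σ)) (n : ℕ) : ℝ :=
  sSup { r : ℝ | ∃ w ∈ W n, ∃ w' ∈ W (n + 1), r = Freq k n (n + 1) w w' }

/-- The cylinder `⟨w⟩` determined by an `n`-word `w`: those `x` in the limit `K` whose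
parsing into `n`-words has offset `a = 0` and whose principal `n`-subword `x↾[0,K_n)` is `w`. -/
def cylinder {σ : Type*} (W : ℕ → Set (List σ)) (k : ℕ → ℕ) (n : ℕ) (w : List σ) :
    Set (ℤ → σ) :=
  { x | x ∈ CSLimit W ∧ (∀ j : ℤ, subwordAt x (j * (Kseq k n : ℤ)) (Kseq k n) ∈ W n) ∧
        subwordAt x 0 (Kseq k n) = w }

/-!
Every point of `K` is cut into `n`-words along a grid `a + K_n ℤ`: the grid is read off from an
occurrence of a long window of the point inside some later construction word, and unique
readability makes it unique modulo `K_n`. Hence the translates `sh^p ⟨u⟩` (`u ∈ W_n`,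
`0 ≤ p < K_n`) partition `K`, and shift invariance gives `∑_u ρ⟨u⟩ = 1 / K_n`. Refining the grid of
level `n+1` to level `n` splits `⟨w⟩` into translates of the cylinders `⟨w'⟩`, `w' ∈ W_{n+1}`, one
for each occurrence of `w` in `w'`, so `ρ⟨w⟩ = ∑_{w'} occ(w, w') ρ⟨w'⟩`. Both bounds follow from
`1 ≤ occ(w, w') ≤ f_n K_{n+1} / K_n` and `∑_{w'} ρ⟨w'⟩ = 1 / K_{n+1}`.
-/

section Words

variable {σ : Type*}

@[simp] lemma length_subwordAt (x : ℤ → σ) (a : ℤ) (m : ℕ) : (subwordAt x a m).length = m := by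
  simp [subwordAt]

lemma subwordAt_shiftZ (x : ℤ → σ) (c a : ℤ) (m : ℕ) :
    subwordAt (shiftZ c x) a m = subwordAt x (a + c) m := by
  simp only [subwordAt, shiftZ, add_right_comm]

lemma subwordAt_add (x : ℤ → σ) (a : ℤ) (m₁ m₂ : ℕ) :
    subwordAt x a (m₁ + m₂) = subwordAt x a m₁ ++ subwordAt x (a + m₁) m₂ := by
  simp [subwordAt, List.ofFn_add, add_assoc]

lemma take_drop_subwordAt (x : ℤ → σ) (a : ℤ) {m d L : ℕ} (h : d + L ≤ m) :
    ((subwordAt x a m).drop d).take L = subwordAt x (a + d) L := by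
  obtain ⟨r, rfl⟩ := Nat.exists_eq_add_of_le h
  rw [subwordAt_add, subwordAt_add, List.append_assoc, List.drop_left' (length_subwordAt ..),
    List.take_left' (length_subwordAt ..)]

lemma occursAt_subwordAt_iff {u : List σ} {x : ℤ → σ} {a : ℤ} {M p : ℕ}
    (h : p + u.length ≤ M) :
    occursAt u (subwordAt x a M) p ↔ subwordAt x (a + p) u.length = u := by
  simp only [occursAt, length_subwordAt, h, true_and, take_drop_subwordAt x a h]

lemma take_drop_flatten {g : List (List σ)} {K : ℕ} (hlen : ∀ u ∈ g, u.length = K) {t : ℕ}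
    (ht : t < g.length) : (g.flatten.drop (t * K)).take K = g[t] := by
  have hmap : g.map List.length = List.replicate g.length K :=
    List.eq_replicate_iff.mpr ⟨by simp, by simpa using hlen⟩
  have hsum : ((g.map List.length).take t).sum = t * K := by
    simp [hmap, List.take_replicate, min_eq_left ht.le]
  rw [← hsum, List.drop_sum_flatten, List.drop_eq_getElem_cons ht, List.flatten_cons,
    List.take_left' (hlen _ (List.getElem_mem ht))]

lemma length_flatten_of_forall_length_eq_s16 {g : List (List σ)} {K : ℕ}
    (hlen : ∀ u ∈ g, u.length = K) : g.flatten.length = g.length * K := by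
  rw [List.length_flatten, List.map_congr_left hlen, List.map_const', List.sum_replicate,
    smul_eq_mul]

/-- `K ∣ z - b + p` says that `x↾[z, z+K)` is aligned with the blocks of `g.flatten`. -/
lemma subwordAt_mem_of_occursAt_flatten {S : Set (List σ)} {K : ℕ} (hK : 0 < K)
    (hlen : ∀ u ∈ S, u.length = K) {g : List (List σ)} (hg : ∀ u ∈ g, u ∈ S)
    {x : ℤ → σ} {b : ℤ} {M p : ℕ} (hocc : occursAt (subwordAt x b M) g.flatten p) {z : ℤ}
    (hdvd : (K : ℤ) ∣ z - b + p) (hbz : b ≤ z) (hzM : z + K ≤ b + M) :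
    subwordAt x z K ∈ S := by
  obtain ⟨d, rfl⟩ : ∃ d : ℕ, z = b + d := ⟨(z - b).toNat, by omega⟩
  obtain ⟨t, ht⟩ : K ∣ p + d :=
    Int.natCast_dvd_natCast.mp (by push_cast; convert hdvd using 1; ring)
  have hdM : d + K ≤ M := by omega
  have hglen := length_flatten_of_forall_length_eq_s16 fun u hu => hlen u (hg u hu)
  have htg : t < g.length := by
    have := hocc.1
    rw [length_subwordAt, hglen] at this
    exact Nat.lt_of_mul_lt_mul_left (a := K) (by nlinarith)
  have hocc2 := hocc.2
  rw [length_subwordAt] at hocc2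
  rw [← take_drop_subwordAt x b hdM, ← hocc2, List.drop_take, List.drop_drop, List.take_take,
    min_eq_left (by omega), ht, mul_comm,
    take_drop_flatten (fun u hu => hlen u (hg u hu)) htg]
  exact hg _ (List.getElem_mem htg)

end Words

section Parsing

variable {σ : Type*} {k : ℕ → ℕ} {W : ℕ → Set (List σ)} {n : ℕ} {a c : ℤ} {x : ℤ → σ}

/-- `a` is the paper's parsing offset, not normalised to `-K_n < a ≤ 0`. -/
def ParsesAt (W : ℕ → Set (List σ)) (k : ℕ → ℕ) (n : ℕ) (a : ℤ) (x : ℤ → σ) : Prop :=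
  ∀ j : ℤ, subwordAt x (a + j * Kseq k n) (Kseq k n) ∈ W n

lemma parsesAt_zero_iff :
    ParsesAt W k n 0 x ↔ ∀ j : ℤ, subwordAt x (j * Kseq k n) (Kseq k n) ∈ W n := by
  simp only [ParsesAt, zero_add]

lemma parsesAt_shiftZ_iff : ParsesAt W k n a (shiftZ c x) ↔ ParsesAt W k n (a + c) x := by
  simp only [ParsesAt, subwordAt_shiftZ, add_right_comm]

lemma ParsesAt.add_mul (h : ParsesAt W k n a x) (c : ℤ) :
    ParsesAt W k n (a + c * Kseq k n) x := fun j => by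
  simpa only [_root_.add_mul, add_assoc] using h (c + j)

lemma shiftZ_mem_CSLimit_iff : shiftZ c x ∈ CSLimit W ↔ x ∈ CSLimit W := by
  simp only [CSLimit, Set.mem_ofPred_eq, subwordAt_shiftZ]
  exact ⟨fun h a => by simpa using h (a - c), fun h a => h (a + c)⟩

lemma shiftZ_mem_cylinder_iff {u : List σ} :
    shiftZ c x ∈ cylinder W k n u ↔
      x ∈ CSLimit W ∧ ParsesAt W k n c x ∧ subwordAt x c (Kseq k n) = u := by
  simp only [cylinder, Set.mem_ofPred_eq, shiftZ_mem_CSLimit_iff, ← parsesAt_zero_iff,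
    parsesAt_shiftZ_iff, zero_add, subwordAt_shiftZ]

end Parsing

section Odometer

variable {σ : Type*} [Fintype σ] {k : ℕ → ℕ} {W : ℕ → Set (List σ)} {n : ℕ} {a : ℤ}
  {x : ℤ → σ}

lemma OdometerBasedCS.k_pos_s16 (hW : OdometerBasedCS σ k W) (n : ℕ) : 0 < k n := by
  have := hW.two_le n
  omega

lemma OdometerBasedCS.exists_flatten (hW : OdometerBasedCS σ k W) {m : ℕ} (h : n ≤ m) :
    ∀ w ∈ W m, ∃ g : List (List σ), (∀ u ∈ g, u ∈ W n) ∧ w = g.flatten := by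
  induction m, h using Nat.le_induction with
  | base => exact fun w hw => ⟨[w], by simpa using hw, by simp⟩
  | succ m _ ih =>
    intro w hw
    obtain ⟨g, hg, rfl⟩ := hW.concat m w hw
    choose G hG hGg using fun i => ih (g i) (hg i)
    refine ⟨(List.ofFn G).flatten, fun u hu => ?_, ?_⟩
    · obtain ⟨l, hl, hul⟩ := List.mem_flatten.mp hu
      obtain ⟨i, rfl⟩ := List.mem_ofFn.mp hl
      exact hG i u hul
    · rw [List.flatten_flatten, List.map_ofFn]
      exact congrArg _ (congrArg _ (funext hGg))

lemma OdometerBasedCS.eq_of_subwordAt_mem (hW : OdometerBasedCS σ k W) {z : ℤ}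
    (hu : subwordAt x a (Kseq k n) ∈ W n) (hv : subwordAt x (a + Kseq k n) (Kseq k n) ∈ W n)
    (hw : subwordAt x z (Kseq k n) ∈ W n) (haz : a ≤ z) (hza : z < a + Kseq k n) : z = a := by
  obtain ⟨d, rfl⟩ : ∃ d : ℕ, z = a + d := ⟨(z - a).toNat, by omega⟩
  have hocc : occursAt (subwordAt x (a + d) (Kseq k n)) (subwordAt x a (Kseq k n + Kseq k n)) d :=
    (occursAt_subwordAt_iff (by simp; omega)).mpr (by simp)
  rw [subwordAt_add] at hocc
  rcases hW.unique_readable n _ hu _ hv _ hw d hocc with h | h <;> omega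

lemma ParsesAt.dvd_sub_of_mem (h : ParsesAt W k n a x) (hW : OdometerBasedCS σ k W) {z : ℤ}
    (hz : subwordAt x z (Kseq k n) ∈ W n) : (Kseq k n : ℤ) ∣ z - a := by
  have hK : (0 : ℤ) < Kseq k n := by exact_mod_cast Kseq_pos hW.k_pos_s16 n
  set q := (z - a) / Kseq k n
  have hlo := Int.ediv_mul_le (z - a) hK.ne'
  have hhi := Int.lt_ediv_add_one_mul_self (z - a) hK
  have hq : z = a + q * Kseq k n :=
    hW.eq_of_subwordAt_mem (h q) (by simpa only [add_one_mul, add_assoc] using h (q + 1)) hz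
      (by linarith) (by linarith)
  exact ⟨q, by rw [hq]; ring⟩

lemma ParsesAt.of_succ (h : ParsesAt W k (n + 1) a x) (hW : OdometerBasedCS σ k W) :
    ParsesAt W k n a x := by
  intro j
  have hk : (0 : ℤ) < k n := by exact_mod_cast hW.k_pos_s16 n
  have hK : (0 : ℤ) < Kseq k n := by exact_mod_cast Kseq_pos hW.k_pos_s16 n
  have hKK : (Kseq k (n + 1) : ℤ) = Kseq k n * k n := by simp [Kseq]
  set q := j / k n
  have hlo := Int.ediv_mul_le j hk.ne'
  have hhi := Int.lt_ediv_add_one_mul_self j hk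
  obtain ⟨g, hg, hgw⟩ := hW.exists_flatten n.le_succ _ (h q)
  have hocc : occursAt (subwordAt x (a + q * Kseq k (n + 1)) (Kseq k (n + 1))) g.flatten 0 := by
    rw [← hgw]
    exact ⟨by simp, by simp⟩
  refine subwordAt_mem_of_occursAt_flatten (Kseq_pos hW.k_pos_s16 n) (hW.length_eq n) hg hocc
    ⟨j - q * k n, by rw [hKK]; ring⟩ ?_ ?_
  · rw [hKK]; nlinarith
  · rw [hKK]; nlinarith

lemma OdometerBasedCS.exists_window_parse (hW : OdometerBasedCS σ k W) (hx : x ∈ CSLimit W)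
    (n N : ℕ) : ∃ p : ℕ, p < Kseq k n ∧ ∀ j : ℤ, -N ≤ j → j < N →
      subwordAt x (-p + j * Kseq k n) (Kseq k n) ∈ W n := by
  have hK := Kseq_pos hW.k_pos_s16 n
  set K := Kseq k n
  -- The window `[-(N+1)K, (N+1)K)` is longer than any `m`-word with `m < n`, and contains the
  -- blocks `j ∈ [-N, N)` of every grid `-p + Kℤ` with `0 ≤ p < K`.
  obtain ⟨m, w, hw, p₀, hocc⟩ := hx (-(N + 1) * K) ((2 * N + 2) * K)
  have hnm : n ≤ m := by
    by_contra! hmn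
    have := hocc.1
    rw [length_subwordAt, hW.length_eq m w hw] at this
    have := Kseq_mono hW.k_pos_s16 hmn.le
    nlinarith
  obtain ⟨g, hg, rfl⟩ := hW.exists_flatten hnm w hw
  have hKz : (0 : ℤ) < K := by exact_mod_cast hK
  set r := (p₀ + (N + 1) * K : ℤ) % K
  have hr₀ : 0 ≤ r := Int.emod_nonneg _ hKz.ne'
  have hr₁ : r < K := Int.emod_lt_of_pos _ hKz
  refine ⟨r.toNat, by omega, fun j hj₁ hj₂ => ?_⟩
  rw [Int.toNat_of_nonneg hr₀]
  refine subwordAt_mem_of_occursAt_flatten hK (hW.length_eq n) hg hocc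
    ⟨(p₀ + (N + 1) * K : ℤ) / K + j, ?_⟩ ?_ ?_
  · have := Int.emod_add_mul_ediv (p₀ + (N + 1) * K : ℤ) K
    linarith
  · nlinarith
  · push_cast; nlinarith

lemma OdometerBasedCS.exists_parsesAt_neg (hW : OdometerBasedCS σ k W) (hx : x ∈ CSLimit W)
    (n : ℕ) : ∃ p : ℕ, p < Kseq k n ∧ ParsesAt W k n (-p) x := by
  choose P hPK hP using hW.exists_window_parse hx n
  have hle : ∀ N N', 2 ≤ N → 2 ≤ N' → P N' ≤ P N → P N' = P N := by
    intro N N' hN hN' hPP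
    have := hW.eq_of_subwordAt_mem (by simpa using hP N 0 (by omega) (by omega))
      (by simpa using hP N 1 (by omega) (by omega)) (by simpa using hP N' 0 (by omega) (by omega))
      (by omega) (by have := hPK N; omega)
    omega
  have hP2 : ∀ N, 2 ≤ N → P N = P 2 := fun N hN =>
    (le_total (P N) (P 2)).elim (hle 2 N le_rfl hN) fun h => (hle N 2 hN le_rfl h).symm
  refine ⟨P 2, hPK 2, fun j => ?_⟩
  rw [← hP2 (j.natAbs + 2) (by omega)]
  exact hP _ j (by omega) (by omega)

end Odometer

section Shift

variable {σ : Type*}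

lemma shiftZ_natCast (n : ℕ) : (shiftZ n : (ℤ → σ) → ℤ → σ) = shift^[n] := by
  induction n with
  | zero => funext x m; simp [shiftZ]
  | succ n ih =>
    funext x m
    rw [Function.iterate_succ_apply, ← ih]
    simp only [shiftZ, shift, Nat.cast_succ, add_assoc]

lemma shiftZ_zero : (shiftZ 0 : (ℤ → σ) → ℤ → σ) = id := by
  funext x m
  simp [shiftZ]

lemma shiftZ_comp_shiftZ (a b : ℤ) :
    (shiftZ a : (ℤ → σ) → ℤ → σ) ∘ shiftZ b = shiftZ (a + b) := by
  funext x m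
  simp [shiftZ, add_assoc]

end Shift

section Measure

variable {α : Type*} [MeasurableSpace α]

lemma measurable_shiftZ (c : ℤ) : Measurable (shiftZ c : (ℤ → α) → ℤ → α) :=
  measurable_pi_lambda _ fun _ => measurable_pi_apply _

lemma measurable_shift : Measurable (shift : (ℤ → α) → ℤ → α) :=
  measurable_pi_lambda _ fun _ => measurable_pi_apply _

lemma measureReal_preimage_shiftZ {ρ : Measure (ℤ → α)} (hρ : MeasurePreserving shift ρ ρ)
    (c : ℤ) {A : Set (ℤ → α)} (hA : MeasurableSet A) : ρ.real (shiftZ c ⁻¹' A) = ρ.real A := by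
  obtain ⟨n, rfl | rfl⟩ := Int.eq_nat_or_neg c
  · rw [shiftZ_natCast]
    exact (hρ.iterate n).measureReal_preimage hA.nullMeasurableSet
  · rw [← (hρ.iterate n).measureReal_preimage (measurable_shiftZ _ hA).nullMeasurableSet,
      ← shiftZ_natCast, ← Set.preimage_comp, shiftZ_comp_shiftZ, neg_add_cancel, shiftZ_zero,
      Set.preimage_id]

variable [Fintype α] [DiscreteMeasurableSpace α]

lemma measurableSet_subwordAt_mem (a : ℤ) (m : ℕ) (S : Set (List α)) :
    MeasurableSet {x : ℤ → α | subwordAt x a m ∈ S} :=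
  (Set.toFinite {v : Fin m → α | List.ofFn v ∈ S}).measurableSet.preimage
    (measurable_pi_lambda _ fun _ => measurable_pi_apply _)

lemma measurableSet_CSLimit (W : ℕ → Set (List α)) : MeasurableSet (CSLimit W) := by
  simp only [CSLimit, Set.ofPred_forall]
  exact .iInter fun a => .iInter fun m =>
    measurableSet_subwordAt_mem a m {u | ∃ n, ∃ w ∈ W n, ∃ p, occursAt u w p}

lemma measurableSet_cylinder (W : ℕ → Set (List α)) (k : ℕ → ℕ) (n : ℕ) (w : List α) :
    MeasurableSet (cylinder W k n w) := by
  simp only [cylinder, Set.ofPred_and, Set.ofPred_mem_eq, Set.ofPred_forall]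
  exact (measurableSet_CSLimit W).inter
    ((MeasurableSet.iInter fun j => measurableSet_subwordAt_mem _ _ _).inter
      (measurableSet_subwordAt_mem 0 _ {w}))

end Measure

open Classical Finset in
lemma occCount_eq_card_filter_range {σ : Type*} {w l : List σ} {N : ℕ}
    (h : ∀ p, occursAt w l p → p < N) :
    occCount w l = #{p ∈ range N | occursAt w l p} := by
  change Set.ncard {p | occursAt w l p} = _
  rw [← Set.ncard_coe_finset]
  congr
  ext p
  simpa using fun hp => h p hp

namespace OdometerBasedCS

variable {α : Type*} [Fintype α] {k : ℕ → ℕ} {W : ℕ → Set (List α)} {n : ℕ} {w : List α}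

lemma one_le_occCount (hW : OdometerBasedCS α k W) (hw : w ∈ W n) {w' : List α}
    (hw' : w' ∈ W (n + 1)) : 1 ≤ occCount w w' := by
  classical
  obtain ⟨p, hp⟩ := hW.subword n w hw w' hw'
  rw [occCount_eq_card_filter_range (N := w'.length + 1) fun q hq => by have := hq.1; omega]
  exact Finset.card_pos.mpr
    ⟨p, Finset.mem_filter.mpr ⟨Finset.mem_range.mpr (by have := hp.1; omega), hp⟩⟩

lemma occCount_le_maxFreq_mul (hW : OdometerBasedCS α k W) (hw : w ∈ W n) {w' : List α}
    (hw' : w' ∈ W (n + 1)) :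
    (occCount w w' : ℝ) ≤ maxFreq k W n * (Kseq k (n + 1) / Kseq k n) := by
  have hbdd : BddAbove {r : ℝ | ∃ w ∈ W n, ∃ w' ∈ W (n + 1), r = Freq k n (n + 1) w w'} := by
    refine (((hW.finite n).image2 (Freq k n (n + 1)) (hW.finite (n + 1))).subset ?_).bddAbove
    rintro r ⟨u, hu, u', hu', rfl⟩
    exact Set.mem_image2_of_mem hu hu'
  have hfreq : Freq k n (n + 1) w w' ≤ maxFreq k W n := le_csSup hbdd ⟨w, hw, w', hw', rfl⟩
  have hK := Kseq_pos hW.k_pos_s16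
  rwa [Freq, div_le_iff₀ (by have := hK n; have := hK (n + 1); positivity)] at hfreq

lemma pairwiseDisjoint_preimage_shiftZ_cylinder (hW : OdometerBasedCS α k W) (m : ℕ) :
    (W m ×ˢ Set.Iio (Kseq k m)).PairwiseDisjoint
      fun q : List α × ℕ => shiftZ (-q.2 : ℤ) ⁻¹' cylinder W k m q.1 := by
  rintro ⟨u₁, p₁⟩ ⟨-, hp₁⟩ ⟨u₂, p₂⟩ ⟨-, hp₂⟩ hne
  refine Set.disjoint_left.mpr fun x h₁ h₂ => hne ?_
  rw [Set.mem_preimage, shiftZ_mem_cylinder_iff] at h₁ h₂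
  simp only [Set.mem_Iio] at h₁ h₂ hp₁ hp₂
  have hdvd := h₁.2.1.dvd_sub_of_mem hW (by simpa using h₂.2.1 0)
  have hp : p₁ = p₂ := by
    have := Int.eq_zero_of_abs_lt_dvd hdvd (by rw [abs_lt]; omega)
    omega
  subst hp
  rw [← h₁.2.2, ← h₂.2.2]

lemma CSLimit_eq_biUnion (hW : OdometerBasedCS α k W) (n : ℕ) :
    CSLimit W = ⋃ q ∈ (hW.finite n).toFinset ×ˢ Finset.range (Kseq k n),
      shiftZ (-q.2 : ℤ) ⁻¹' cylinder W k n q.1 := by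
  ext x
  simp only [Set.mem_iUnion, Set.mem_preimage, shiftZ_mem_cylinder_iff, Finset.mem_product,
    Set.Finite.mem_toFinset, Finset.mem_range, exists_prop, Prod.exists]
  constructor
  · intro hx
    obtain ⟨p, hp, hpx⟩ := hW.exists_parsesAt_neg hx n
    exact ⟨_, p, ⟨by simpa using hpx 0, hp⟩, hx, hpx, rfl⟩
  · rintro ⟨-, -, -, hx, -⟩
    exact hx

open Classical in
lemma cylinder_eq_biUnion (hW : OdometerBasedCS α k W) (hw : w ∈ W n) :
    cylinder W k n w = ⋃ q ∈ ((hW.finite (n + 1)).toFinset ×ˢ Finset.range (Kseq k (n + 1))).filter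
      (fun q => occursAt w q.1 q.2), shiftZ (-q.2 : ℤ) ⁻¹' cylinder W k (n + 1) q.1 := by
  have hwK := hW.length_eq n w hw
  have hKK : Kseq k (n + 1) = Kseq k n * k n := rfl
  ext x
  simp only [Set.mem_iUnion, Set.mem_preimage, shiftZ_mem_cylinder_iff, Finset.mem_filter,
    Finset.mem_product, Set.Finite.mem_toFinset, Finset.mem_range, exists_prop, Prod.exists]
  constructor
  · rintro ⟨hx, hx0, rfl⟩
    obtain ⟨p, hp, hpx⟩ := hW.exists_parsesAt_neg hx (n + 1)
    obtain ⟨d, hd⟩ := (hpx.of_succ hW).dvd_sub_of_mem hW (by simpa using hx0 0)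
    have hpK : p + Kseq k n ≤ Kseq k (n + 1) := by
      have hK : (0 : ℤ) < Kseq k n := by exact_mod_cast Kseq_pos hW.k_pos_s16 n
      have hdk : d + 1 ≤ k n := by
        have : (p : ℤ) < Kseq k n * k n := by exact_mod_cast hp
        exact lt_of_mul_lt_mul_left (by linarith) hK.le
      rw [hKK]
      zify
      nlinarith
    refine ⟨_, p, ⟨⟨by simpa using hpx 0, hp⟩, (occursAt_subwordAt_iff (by simpa using hpK)).mpr
      (by simp)⟩, hx, hpx, rfl⟩
  · rintro ⟨w', p, ⟨⟨-, -⟩, hocc⟩, hx, hpx, rfl⟩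
    have hpK : p + w.length ≤ Kseq k (n + 1) := by simpa using hocc.1
    have hx0 : subwordAt x 0 (Kseq k n) = w := by
      simpa [hwK] using (occursAt_subwordAt_iff hpK).mp hocc
    have hpn := hpx.of_succ hW
    obtain ⟨c, hc⟩ := hpn.dvd_sub_of_mem hW (hx0 ▸ hw)
    refine ⟨hx, parsesAt_zero_iff.mp ?_, hx0⟩
    have : -(p : ℤ) + c * Kseq k n = 0 := by linarith
    simpa [this] using hpn.add_mul c

variable [MeasurableSpace α] [DiscreteMeasurableSpace α] {ρ : Measure (ℤ → α)}
  [IsFiniteMeasure ρ]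

lemma measureReal_CSLimit (hW : OdometerBasedCS α k W) (hρ : MeasurePreserving shift ρ ρ)
    (n : ℕ) :
    ρ.real (CSLimit W) = Kseq k n * ∑ u ∈ (hW.finite n).toFinset, ρ.real (cylinder W k n u) := by
  rw [hW.CSLimit_eq_biUnion n, measureReal_biUnion_finset, Finset.sum_product, Finset.mul_sum]
  · refine Finset.sum_congr rfl fun u _ => ?_
    simp [measureReal_preimage_shiftZ hρ _ (measurableSet_cylinder W k n u)]
  · simpa using hW.pairwiseDisjoint_preimage_shiftZ_cylinder n
  · exact fun q _ => measurable_shiftZ _ (measurableSet_cylinder W k n q.1)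

lemma measureReal_cylinder (hW : OdometerBasedCS α k W) (hρ : MeasurePreserving shift ρ ρ)
    (hw : w ∈ W n) :
    ρ.real (cylinder W k n w) = ∑ w' ∈ (hW.finite (n + 1)).toFinset,
      occCount w w' * ρ.real (cylinder W k (n + 1) w') := by
  classical
  rw [hW.cylinder_eq_biUnion hw, measureReal_biUnion_finset, Finset.sum_filter, Finset.sum_product]
  · refine Finset.sum_congr rfl fun w' hw' => ?_
    have hocc_lt : ∀ p, occursAt w w' p → p < Kseq k (n + 1) := fun p hp => by
      have := hp.1
      rw [hW.length_eq n w hw, hW.length_eq (n + 1) w' (by simpa using hw')] at this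
      have := Kseq_pos hW.k_pos_s16 n
      omega
    rw [← Finset.sum_filter, occCount_eq_card_filter_range hocc_lt, Finset.card_eq_sum_ones,
      Nat.cast_sum, Finset.sum_mul]
    refine Finset.sum_congr rfl fun p _ => ?_
    rw [Nat.cast_one, one_mul, measureReal_preimage_shiftZ hρ _ (measurableSet_cylinder W k _ _)]
  · refine (hW.pairwiseDisjoint_preimage_shiftZ_cylinder (n + 1)).subset ?_
    intro q hq
    simp only [Finset.coe_filter, Finset.mem_product, Set.Finite.mem_toFinset, Finset.mem_range,
      Set.mem_ofPred_eq] at hq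
    exact ⟨hq.1.1, hq.1.2⟩
  · exact fun q _ => measurable_shiftZ _ (measurableSet_cylinder W k _ q.1)

end OdometerBasedCS

/-- for any shift-invariant Borel probability measure `ρ` on the limit of an
odometer based construction sequence, the cylinder of each `n`-word `w` satisfies
`1/K_{n+1} ≤ ρ(⟨w⟩) ≤ f_n / K_n`. -/
theorem cylinder_measure_bounds
    {α : Type} [Fintype α] [MeasurableSpace α] [DiscreteMeasurableSpace α]
    (k : ℕ → ℕ) (W : ℕ → Set (List α)) (hW : OdometerBasedCS α k W)
    (ρ : Measure (ℤ → α)) (hprob : IsProbabilityMeasure ρ)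
    (hinv : Measure.map shift ρ = ρ) (hsupp : ρ (CSLimit W) = 1) :
    ∀ n : ℕ, ∀ w ∈ W n,
      (1 : ℝ) / (Kseq k (n + 1) : ℝ) ≤ (ρ (cylinder W k n w)).toReal ∧
      (ρ (cylinder W k n w)).toReal ≤ maxFreq k W n / (Kseq k n : ℝ) := by
  intro n w hw
  have hρ : MeasurePreserving shift ρ ρ := ⟨measurable_shift, hinv⟩
  have hK : (0 : ℝ) < Kseq k n := by exact_mod_cast Kseq_pos hW.k_pos_s16 n
  have hK' : (0 : ℝ) < Kseq k (n + 1) := by exact_mod_cast Kseq_pos hW.k_pos_s16 (n + 1)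
  have hsum : ∑ w' ∈ (hW.finite (n + 1)).toFinset, ρ.real (cylinder W k (n + 1) w') =
      1 / Kseq k (n + 1) := by
    have h := hW.measureReal_CSLimit hρ (n + 1)
    rw [measureReal_def, hsupp, ENNReal.toReal_one] at h
    rw [eq_div_iff hK'.ne']
    linarith
  rw [← measureReal_def, hW.measureReal_cylinder hρ hw]
  constructor
  · rw [← hsum]
    refine Finset.sum_le_sum fun w' hw' => le_mul_of_one_le_left measureReal_nonneg ?_
    exact_mod_cast hW.one_le_occCount hw (by simpa using hw')
  · calc _ ≤ ∑ w' ∈ (hW.finite (n + 1)).toFinset,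
          maxFreq k W n * (Kseq k (n + 1) / Kseq k n) * ρ.real (cylinder W k (n + 1) w') :=
          Finset.sum_le_sum fun w' hw' => mul_le_mul_of_nonneg_right
            (hW.occCount_le_maxFreq_mul hw (by simpa using hw')) measureReal_nonneg
      _ = maxFreq k W n / Kseq k n := by
          rw [← Finset.mul_sum, hsum]
          field_simp

end OdoPaper
end
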